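/- arXiv:2212.03070 — 2 statements merged into one kernel-verified Lean document; each statement's English description precedes it below -/
import Mathlib

section
/- Under the same setup and conditions A1–A3 as in the identifiability theorem, if h(t;λ₁,α₁,p₁) = h(t;λ₂,α₂,p₂) for all t > 0 and 0 < A(λ₁,α₁) < ∞, then (λ₁,α₁) = (λ₂,α₂); moreover if the hazard t ↦ f(t;λ₁,α₁)/(1-F(t;λ₁,α₁)) is not constant, then also p₁ = p₂. -/
/-!
Divide the identity of the two mixtures by the survival function `S₁ = 1 - F₁`, which never
vanishes because the hazard `f₁ / S₁` has a positive finite limit `A`. The left side then tends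
to `p₁ A + (1 - p₁) / μ₁ > 0`. If the parameter pairs differed, A3 would send `f₂ / S₁` to `0`
or `∞`; either way the survival ratio `S₂ / S₁` must then have a positive finite limit `c`,
so `f₁ / S₂ → A / c`, contradicting A3 again. With equal parameters the identity reads
`(p₁ - p₂) (f₁ - S₁ / μ₁) = 0`, so `p₁ ≠ p₂` makes the hazard the constant `1 / μ₁`.
-/

open MeasureTheory Set Filter Topology

theorem exists_pos_tendsto_of_tendsto_ereal_coe {α : Type*} {l : Filter α} {u : α → ℝ}
    {a : EReal} (h : Tendsto (fun x => (u x : EReal)) l (𝓝 a)) (ha : 0 < a) (ha' : a < ⊤) :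
    ∃ A : ℝ, 0 < A ∧ Tendsto u l (𝓝 A) := by
  obtain ⟨A, rfl⟩ : ∃ A : ℝ, (A : EReal) = a :=
    ⟨a.toReal, EReal.coe_toReal ha'.ne (ne_bot_of_gt ha)⟩
  exact ⟨A, EReal.coe_pos.1 ha, EReal.tendsto_coe.1 h⟩

theorem monotone_setIntegral_Ioc {f : ℝ → ℝ} {a : ℝ} (hf₀ : ∀ t ∈ Ioi a, 0 ≤ f t)
    (hf : IntegrableOn f (Ioi a)) : Monotone fun t => ∫ s in Ioc a t, f s :=
  fun _ _ hst => setIntegral_mono_set (hf.mono_set Ioc_subset_Ioi_self)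
    ((ae_restrict_iff' measurableSet_Ioc).2 (ae_of_all _ fun s hs => hf₀ s hs.1))
    (Ioc_subset_Ioc_right hst).eventuallyLE

theorem setIntegral_Ioc_le_setIntegral_Ioi {f : ℝ → ℝ} {a : ℝ} (hf₀ : ∀ t ∈ Ioi a, 0 ≤ f t)
    (hf : IntegrableOn f (Ioi a)) (t : ℝ) : ∫ s in Ioc a t, f s ≤ ∫ s in Ioi a, f s :=
  setIntegral_mono_set hf ((ae_restrict_iff' measurableSet_Ioi).2 (ae_of_all _ hf₀))
    Ioc_subset_Ioi_self.eventuallyLE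

theorem pos_of_antitone_of_tendsto_div {α : Type*} [SemilatticeSup α] [Nonempty α]
    {S u : α → ℝ} {A : ℝ} (hS : Antitone S) (hS₀ : ∀ t, 0 ≤ S t) (hA : 0 < A)
    (h : Tendsto (fun t => u t / S t) atTop (𝓝 A)) (t : α) : 0 < S t := by
  obtain ⟨T, hT⟩ := (h.eventually (eventually_gt_nhds hA)).exists_forall_of_atTop
  -- `u / 0 = 0` is not near `A > 0`
  have hST : S (t ⊔ T) ≠ 0 := fun h0 => by simpa [h0] using hT (t ⊔ T) le_sup_right
  exact ((hS₀ _).lt_of_ne' hST).trans_le (hS le_sup_left)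

theorem exists_pos_tendsto_of_tendsto_mul_add_mul {α : Type*} {l : Filter α} [l.NeBot]
    {x y : α → ℝ} {p q L : ℝ} (hp : 0 ≤ p) (hq : 0 ≤ q) (hy : ∀ᶠ t in l, 0 ≤ y t)
    (hL : 0 < L) (hx : Tendsto x l (𝓝 0) ∨ Tendsto x l atTop)
    (h : Tendsto (fun t => p * x t + q * y t) l (𝓝 L)) :
    ∃ c, 0 < c ∧ Tendsto y l (𝓝 c) := by
  have hqy : Tendsto (fun t => q * y t) l (𝓝 L) := by
    rcases hx with hx₀ | hx_top
    · simpa using h.sub (hx₀.const_mul p)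
    · obtain rfl : 0 = p := by
        refine hp.eq_or_lt.resolve_right fun hp₀ => not_tendsto_atTop_of_tendsto_nhds h ?_
        refine tendsto_atTop_mono' _ ?_ (hx_top.const_mul_atTop hp₀)
        filter_upwards [hy] with t ht
        linarith [mul_nonneg hq ht]
      simpa using h
  have hq₀ : q ≠ 0 := by
    rintro rfl
    exact hL.ne (by simpa using hqy)
  exact ⟨L / q, div_pos hL (hq.lt_of_ne' hq₀),
    (hqy.div_const q).congr fun t => mul_div_cancel_left₀ _ hq₀⟩

theorem exists_pos_tendsto_div_of_mixture_eq {α : Type*} {l : Filter α} [l.NeBot]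
    {f₁ f₂ S₁ S₂ : α → ℝ} {μ₁ μ₂ p₁ p₂ A : ℝ} (hμ₁ : 0 < μ₁) (hμ₂ : 0 < μ₂)
    (hp₁ : p₁ ∈ Icc (0:ℝ) 1) (hp₂ : p₂ ∈ Icc (0:ℝ) 1)
    (hS₁ : ∀ᶠ t in l, 0 < S₁ t) (hS₂ : ∀ᶠ t in l, 0 ≤ S₂ t)
    (hmix : ∀ᶠ t in l,
      p₁ * f₁ t + (1 - p₁) * (S₁ t / μ₁) = p₂ * f₂ t + (1 - p₂) * (S₂ t / μ₂))
    (hA : 0 < A) (hhaz : Tendsto (fun t => f₁ t / S₁ t) l (𝓝 A))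
    (hf₂ : Tendsto (fun t => f₂ t / S₁ t) l (𝓝 0) ∨ Tendsto (fun t => f₂ t / S₁ t) l atTop) :
    ∃ c, 0 < c ∧ Tendsto (fun t => f₁ t / S₂ t) l (𝓝 c) := by
  have hL : 0 < p₁ * A + (1 - p₁) / μ₁ := by
    rcases hp₁.1.eq_or_lt with rfl | hp₀
    · simpa using hμ₁
    · nlinarith [mul_pos hp₀ hA, div_nonneg (sub_nonneg.2 hp₁.2) hμ₁.le]
  have hlim : Tendsto (fun t => p₂ * (f₂ t / S₁ t) + (1 - p₂) / μ₂ * (S₂ t / S₁ t)) l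
      (𝓝 (p₁ * A + (1 - p₁) / μ₁)) := by
    refine ((hhaz.const_mul p₁).add_const _).congr' ?_
    filter_upwards [hS₁, hmix] with t ht hm
    linear_combination (norm := skip) hm / S₁ t
    field_simp
    ring
  obtain ⟨c, hc, hratio⟩ := exists_pos_tendsto_of_tendsto_mul_add_mul hp₂.1
    (div_nonneg (sub_nonneg.2 hp₂.2) hμ₂.le)
    (by filter_upwards [hS₁, hS₂] with t h₁ h₂ using div_nonneg h₂ h₁.le) hL hf₂ hlim
  refine ⟨A / c, div_pos hA hc, (hhaz.div hratio hc.ne').congr' ?_⟩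
  filter_upwards [hS₁] with t ht using div_div_div_cancel_right₀ ht.ne' _ _

theorem div_eq_one_div_of_mixture_eq {p₁ p₂ x S μ : ℝ} (hp : p₁ ≠ p₂) (hS : S ≠ 0)
    (h : p₁ * x + (1 - p₁) * (S / μ) = p₂ * x + (1 - p₂) * (S / μ)) : x / S = 1 / μ := by
  have hprod : (p₁ - p₂) * (x - S / μ) = 0 := by linear_combination h
  rw [sub_eq_zero.1 ((mul_eq_zero.1 hprod).resolve_left (sub_ne_zero.2 hp)), div_right_comm,
    div_self hS]

theorem stmt_9_general
    (f F g : ℝ → ℝ → ℝ → ℝ) (μ : ℝ → ℝ → ℝ) (h : ℝ → ℝ → ℝ → ℝ → ℝ)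
    (A : ℝ → ℝ → EReal)
    (hpdf : ∀ l a, (∀ t ∈ Ioi (0:ℝ), 0 ≤ f l a t) ∧
      IntegrableOn (f l a) (Ioi 0) ∧ ∫ t in Ioi (0:ℝ), f l a t = 1)
    (hF : ∀ l a t, F l a t = ∫ s in Ioc (0:ℝ) t, f l a s)
    (hμpos : ∀ l a, 0 < μ l a)
    (hg : ∀ l a t, g l a t = (1 - F l a t) / μ l a)
    (hh : ∀ l a p t, h l a p t = p * f l a t + (1 - p) * g l a t)
    (hA1 : ∀ l a, (0:EReal) ≤ A l a ∧
      Tendsto (fun t => ((f l a t / (1 - F l a t) : ℝ) : EReal)) atTop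
        (nhds (A l a)))
    (hA3 : ∀ l₁ a₁ l₂ a₂, (l₁, a₁) ≠ (l₂, a₂) →
      (Tendsto (fun t => f l₁ a₁ t / (1 - F l₂ a₂ t)) atTop (nhds 0) ∨
        Tendsto (fun t => f l₁ a₁ t / (1 - F l₂ a₂ t)) atTop atTop) ∧
      (Tendsto (fun t => f l₂ a₂ t / (1 - F l₁ a₁ t)) atTop (nhds 0) ∨
        Tendsto (fun t => f l₂ a₂ t / (1 - F l₁ a₁ t)) atTop atTop))
    (l₁ a₁ p₁ l₂ a₂ p₂ : ℝ) (hp₁ : p₁ ∈ Icc (0:ℝ) 1) (hp₂ : p₂ ∈ Icc (0:ℝ) 1)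
    (heq : ∀ t ∈ Ioi (0:ℝ), h l₁ a₁ p₁ t = h l₂ a₂ p₂ t)
    (hAval : (0:EReal) < A l₁ a₁ ∧ A l₁ a₁ < ⊤) :
    l₁ = l₂ ∧ a₁ = a₂ ∧
      ((¬ ∃ c : ℝ, ∀ t ∈ Ioi (0:ℝ),
          f l₁ a₁ t / (1 - F l₁ a₁ t) = c) → p₁ = p₂) := by
  obtain ⟨A₁, hA₁, hhaz⟩ := exists_pos_tendsto_of_tendsto_ereal_coe (hA1 l₁ a₁).2 hAval.1 hAval.2
  have hS_anti (l a : ℝ) : Antitone fun t => 1 - F l a t := fun s t hst => by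
    simp only [hF]
    exact sub_le_sub_left (monotone_setIntegral_Ioc (hpdf l a).1 (hpdf l a).2.1 hst) 1
  have hS_nonneg (l a t : ℝ) : 0 ≤ 1 - F l a t := by
    rw [hF, sub_nonneg, ← (hpdf l a).2.2]
    exact setIntegral_Ioc_le_setIntegral_Ioi (hpdf l a).1 (hpdf l a).2.1 t
  have hS₁ : ∀ t, 0 < 1 - F l₁ a₁ t :=
    pos_of_antitone_of_tendsto_div (hS_anti l₁ a₁) (hS_nonneg l₁ a₁) hA₁ hhaz
  have hmix : ∀ t ∈ Ioi (0:ℝ), p₁ * f l₁ a₁ t + (1 - p₁) * ((1 - F l₁ a₁ t) / μ l₁ a₁)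
      = p₂ * f l₂ a₂ t + (1 - p₂) * ((1 - F l₂ a₂ t) / μ l₂ a₂) := fun t ht => by
    simpa only [hh, hg] using heq t ht
  obtain ⟨rfl, rfl⟩ : l₁ = l₂ ∧ a₁ = a₂ := by
    rw [← Prod.mk.injEq]
    by_contra hne
    obtain ⟨h₁₂, h₂₁⟩ := hA3 l₁ a₁ l₂ a₂ hne
    obtain ⟨c, hc, hlim⟩ := exists_pos_tendsto_div_of_mixture_eq (hμpos l₁ a₁) (hμpos l₂ a₂)
      hp₁ hp₂ (.of_forall hS₁) (.of_forall (hS_nonneg l₂ a₂))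
      ((eventually_gt_atTop 0).mono hmix) hA₁ hhaz h₂₁
    rcases h₁₂ with h₀ | h_top
    · exact hc.ne' (tendsto_nhds_unique hlim h₀)
    · exact not_tendsto_atTop_of_tendsto_nhds hlim h_top
  refine ⟨rfl, rfl, fun hnonconst => by_contra fun hp => hnonconst ?_⟩
  exact ⟨1 / μ l₁ a₁, fun t ht => div_eq_one_div_of_mixture_eq hp (hS₁ t).ne' (hmix t ht)⟩

theorem stmt_9
    (f F g : ℝ → ℝ → ℝ → ℝ) (μ : ℝ → ℝ → ℝ) (h : ℝ → ℝ → ℝ → ℝ → ℝ)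
    (A : ℝ → ℝ → EReal)
    (hpdf : ∀ l a, (∀ t ∈ Ioi (0:ℝ), 0 ≤ f l a t) ∧
      IntegrableOn (f l a) (Ioi 0) ∧ ∫ t in Ioi (0:ℝ), f l a t = 1)
    (hF : ∀ l a t, F l a t = ∫ s in Ioc (0:ℝ) t, f l a s)
    (hμ : ∀ l a, μ l a = ∫ t in Ioi (0:ℝ), t * f l a t)
    (hμpos : ∀ l a, 0 < μ l a)
    (hg : ∀ l a t, g l a t = (1 - F l a t) / μ l a)
    (hh : ∀ l a p t, h l a p t = p * f l a t + (1 - p) * g l a t)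
    (hA1 : ∀ l a, (0:EReal) ≤ A l a ∧
      Tendsto (fun t => ((f l a t / (1 - F l a t) : ℝ) : EReal)) atTop
        (nhds (A l a)))
    (hA2 : ∀ l₁ a₁ l₂ a₂, (l₁, a₁) ≠ (l₂, a₂) →
      Tendsto (fun t => f l₁ a₁ t / f l₂ a₂ t) atTop (nhds 0) ∨
        Tendsto (fun t => f l₁ a₁ t / f l₂ a₂ t) atTop atTop)
    (hA3 : ∀ l₁ a₁ l₂ a₂, (l₁, a₁) ≠ (l₂, a₂) →
      (Tendsto (fun t => f l₁ a₁ t / (1 - F l₂ a₂ t)) atTop (nhds 0) ∨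
        Tendsto (fun t => f l₁ a₁ t / (1 - F l₂ a₂ t)) atTop atTop) ∧
      (Tendsto (fun t => f l₂ a₂ t / (1 - F l₁ a₁ t)) atTop (nhds 0) ∨
        Tendsto (fun t => f l₂ a₂ t / (1 - F l₁ a₁ t)) atTop atTop))
    (l₁ a₁ p₁ l₂ a₂ p₂ : ℝ) (hp₁ : p₁ ∈ Icc (0:ℝ) 1) (hp₂ : p₂ ∈ Icc (0:ℝ) 1)
    (heq : ∀ t ∈ Ioi (0:ℝ), h l₁ a₁ p₁ t = h l₂ a₂ p₂ t)
    (hAval : (0:EReal) < A l₁ a₁ ∧ A l₁ a₁ < ⊤) :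
    l₁ = l₂ ∧ a₁ = a₂ ∧
      ((¬ ∃ c : ℝ, ∀ t ∈ Ioi (0:ℝ),
          f l₁ a₁ t / (1 - F l₁ a₁ t) = c) → p₁ = p₂) :=
  stmt_9_general f F g μ h A hpdf hF hμpos hg hh hA1 hA3 l₁ a₁ p₁ l₂ a₂ p₂ hp₁ hp₂ heq hAval
end

section
/- Let 0 ≤ Δ₁ < Δ₂ < π/2 and Δ = (Δ₁+Δ₂)/2. For η ∈ [−π, π], sup_{θ∈[Δ₁,Δ₂]} cos²(θ−η) equals 1 if η ∈ [Δ₁,Δ₂] ∪ [Δ₁−π, Δ₂−π]; equals cos²(η−Δ₂) if η ∈ [Δ₂, Δ+π/2] ∪ [Δ₂−π, Δ−π/2]; and equals cos²(η−Δ₁) if η ∈ [Δ+π/2, π] ∪ [−π, Δ₁−π] ∪ [Δ−π/2, Δ₁]. -/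
/-!
Since `cos y ^ 2 - cos x ^ 2 = sin (x + y) * sin (x - y)`, the value `cos (θ - η) ^ 2` at an
endpoint dominates all of `[Δ₁, Δ₂]` as soon as the two sines have the same sign, which happens
for `η ∈ [Δ - π/2, Δ + π/2]`. Because `cos ^ 2` has period `π`, the remaining ranges of `η` are
reduced to that window by a shift of `η` by `±π`.
-/

open Real Set

lemma cos_sq_sub_cos_sq (x y : ℝ) : cos y ^ 2 - cos x ^ 2 = sin (x + y) * sin (x - y) := by
  rw [sin_add, sin_sub]
  linear_combination cos x ^ 2 * sin_sq_add_cos_sq y - cos y ^ 2 * sin_sq_add_cos_sq x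

lemma cos_sq_le_cos_sq_of_mem_Icc {x y : ℝ} (hadd : x + y ∈ Icc 0 π) (hsub : x - y ∈ Icc 0 π) :
    cos x ^ 2 ≤ cos y ^ 2 := by
  have := cos_sq_sub_cos_sq x y
  nlinarith [mul_nonneg (sin_nonneg_of_mem_Icc hadd) (sin_nonneg_of_mem_Icc hsub)]

lemma cos_sq_add_pi (x : ℝ) : cos (x + π) ^ 2 = cos x ^ 2 := by
  rw [cos_add_pi, neg_sq]

lemma iSup_cos_sq_sub_add_pi (s : Set ℝ) (η : ℝ) :
    ⨆ θ : s, cos (θ - (η + π)) ^ 2 = ⨆ θ : s, cos (θ - η) ^ 2 := by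
  simp_rw [← sub_sub, cos_sub_pi, neg_sq]

lemma iSup_cos_sq_sub_of_mem {s : Set ℝ} {η : ℝ} (hη : η ∈ s) :
    ⨆ θ : s, cos (θ - η) ^ 2 = 1 := by
  have hmax : IsMaxOn (fun θ => cos (θ - η) ^ 2) s η := fun θ _ => by
    simpa using cos_sq_le_one (θ - η)
  rw [hmax.iSup_eq hη, sub_self, cos_zero, one_pow]

lemma iSup_cos_sq_sub_of_right_le {a b η : ℝ} (hab : a ≤ b) (hbη : b ≤ η)
    (hη : η ≤ (a + b) / 2 + π / 2) :
    ⨆ θ : Icc a b, cos (θ - η) ^ 2 = cos (η - b) ^ 2 := by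
  have hcos (θ : ℝ) : cos (θ - η) = cos (η - θ) := by rw [← cos_neg, neg_sub]
  rw [IsMaxOn.iSup_eq (f := fun θ => cos (θ - η) ^ 2) (right_mem_Icc.2 hab), hcos]
  rintro θ ⟨hθa, hθb⟩
  show cos (θ - η) ^ 2 ≤ cos (b - η) ^ 2
  rw [hcos, hcos]
  exact cos_sq_le_cos_sq_of_mem_Icc ⟨by linarith, by linarith⟩ ⟨by linarith, by linarith⟩

lemma iSup_cos_sq_sub_of_le_left {a b η : ℝ} (hab : a ≤ b) (hη : (a + b) / 2 - π / 2 ≤ η)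
    (hηa : η ≤ a) :
    ⨆ θ : Icc a b, cos (θ - η) ^ 2 = cos (η - a) ^ 2 := by
  rw [IsMaxOn.iSup_eq (f := fun θ => cos (θ - η) ^ 2) (left_mem_Icc.2 hab), ← cos_neg, neg_sub]
  rintro θ ⟨hθa, hθb⟩
  exact cos_sq_le_cos_sq_of_mem_Icc ⟨by linarith, by linarith⟩ ⟨by linarith, by linarith⟩

theorem stmt_16 (Δ₁ Δ₂ : ℝ) (h1 : 0 ≤ Δ₁) (h12 : Δ₁ < Δ₂) (h2 : Δ₂ < π / 2)
    (η : ℝ) (hη : η ∈ Icc (-π) π) :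
    (η ∈ Icc Δ₁ Δ₂ ∪ Icc (Δ₁ - π) (Δ₂ - π) →
      (⨆ θ : Icc Δ₁ Δ₂, Real.cos ((θ : ℝ) - η) ^ 2) = 1) ∧
    (η ∈ Icc Δ₂ ((Δ₁ + Δ₂) / 2 + π / 2) ∪
        Icc (Δ₂ - π) ((Δ₁ + Δ₂) / 2 - π / 2) →
      (⨆ θ : Icc Δ₁ Δ₂, Real.cos ((θ : ℝ) - η) ^ 2) =
        Real.cos (η - Δ₂) ^ 2) ∧
    (η ∈ Icc ((Δ₁ + Δ₂) / 2 + π / 2) π ∪ Icc (-π) (Δ₁ - π) ∪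
        Icc ((Δ₁ + Δ₂) / 2 - π / 2) Δ₁ →
      (⨆ θ : Icc Δ₁ Δ₂, Real.cos ((θ : ℝ) - η) ^ 2) =
        Real.cos (η - Δ₁) ^ 2) := by
  obtain ⟨hπη, hηπ⟩ := hη
  refine ⟨?_, ?_, ?_⟩
  · rintro (hmem | ⟨hlo, hhi⟩)
    · exact iSup_cos_sq_sub_of_mem hmem
    · rw [← iSup_cos_sq_sub_add_pi]
      exact iSup_cos_sq_sub_of_mem ⟨by linarith, by linarith⟩
  · rintro (⟨hlo, hhi⟩ | ⟨hlo, hhi⟩)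
    · exact iSup_cos_sq_sub_of_right_le h12.le hlo hhi
    · rw [← iSup_cos_sq_sub_add_pi, iSup_cos_sq_sub_of_right_le h12.le (by linarith)
        (by linarith), add_sub_right_comm, cos_sq_add_pi]
  · rintro ((⟨hlo, -⟩ | ⟨-, hhi⟩) | ⟨hlo, hhi⟩)
    · obtain ⟨ξ, rfl⟩ : ∃ ξ, η = ξ + π := ⟨η - π, by ring⟩
      rw [iSup_cos_sq_sub_add_pi, iSup_cos_sq_sub_of_le_left h12.le (by linarith) (by linarith),
        add_sub_right_comm, cos_sq_add_pi]
    · rw [← iSup_cos_sq_sub_add_pi, iSup_cos_sq_sub_of_le_left h12.le (by linarith)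
        (by linarith), add_sub_right_comm, cos_sq_add_pi]
    · exact iSup_cos_sq_sub_of_le_left h12.le hlo hhi
end
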